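/- arXiv:1207.6829 — 4 statements merged into one kernel-verified Lean document; each statement's English description precedes it below -/
import Mathlib

section
/- With the notation above, if P gives positive measure to every cylinder, then h is strictly increasing on the complement of the countable exceptional set Q consisting of sequences that eventually (to the left) equal constantly K or constantly 1: if x < y in lexicographic order and x is not in Q (or y is not in Q), then h(x) < h(y). -/
open MeasureTheory

/-! One-sided pasts are elements of `ℕ → Fin (K+1)`, where index `n` represents
position `-n` (so index `0` is position `0`).  The alphabet `{1, …, 𝒦}` with
`𝒦 = K + 1` is modelled by `Fin (K+1)`, the symbol `j` corresponding to `j - 1`. -/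

/-- Strict lexicographic order reading positions `0, -1, -2, …`. -/
def lexLt {K : ℕ} (x y : ℕ → Fin (K+1)) : Prop :=
  ∃ m, (∀ i, i < m → x i = y i) ∧ x m < y m

/-- Lexicographic order. -/
def lexLe {K : ℕ} (x y : ℕ → Fin (K+1)) : Prop := x = y ∨ lexLt x y

/-- `J(x) = {y : y ≤ x}` in the lexicographic order. -/
def lowerSet {K : ℕ} (x : ℕ → Fin (K+1)) : Set (ℕ → Fin (K+1)) := {y | lexLe y x}

/-- The map `h(x) = P(J(x))`. -/
noncomputable def hmap {K : ℕ} (P : Measure (ℕ → Fin (K+1))) (x : ℕ → Fin (K+1)) : ℝ :=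
  (P (lowerSet x)).toReal

/-- `P` has no atoms. -/
def Atomless {K : ℕ} (P : Measure (ℕ → Fin (K+1))) : Prop := ∀ x, P {x} = 0

/-- `P` gives positive mass to every cylinder. -/
def PosCylinders {K : ℕ} (P : Measure (ℕ → Fin (K+1))) : Prop :=
  ∀ (k : ℕ) (w : ℕ → Fin (K+1)), 0 < P {z | ∀ i, i ≤ k → z i = w i}

/-- The countable exceptional set `𝒬`: sequences whose tail (to the left) is
eventually constantly the largest symbol `𝒦` or constantly the smallest symbol `1`. -/
def exceptional (K : ℕ) : Set (ℕ → Fin (K+1)) :=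
  {x | (∃ m, ∀ n, m ≤ n → x n = Fin.last K) ∨ (∃ m, ∀ n, m ≤ n → x n = 0)}

/-- The shift dropping the coordinate at position `0`. -/
def shiftP {K : ℕ} (x : ℕ → Fin (K+1)) : ℕ → Fin (K+1) := x ∘ Nat.succ

/-- The sequence `t_{-∞}^{-1} a` : symbol `a` at position `0` preceded by infinitely many `t`'s. -/
def withTail {K : ℕ} (t a : Fin (K+1)) : ℕ → Fin (K+1) :=
  fun n => if n = 0 then a else t

/-- The sequence `t_{-∞}^{-(k+2)} a z_{-k}^0` : the word `z` on positions `-k, …, 0`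
(`z i` being the symbol at position `-i` for `i ≤ k`), preceded by `a`, preceded by
infinitely many `t`'s. -/
def withSuffix {K : ℕ} (t a : Fin (K+1)) (k : ℕ) (z : ℕ → Fin (K+1)) : ℕ → Fin (K+1) :=
  fun n => if n ≤ k then z n else if n = k + 1 then a else t

/-- Prepending a symbol at position `0`: the sequence `x_{-∞}^{-1} a`. -/
def consP {K : ℕ} (a : Fin (K+1)) (x : ℕ → Fin (K+1)) : ℕ → Fin (K+1) :=
  fun n => if n = 0 then a else x (n - 1)

/-- `p` is a (measurable, normalized) family of transition probabilities. -/
def IsTransFamily {K : ℕ} (p : Fin (K+1) → (ℕ → Fin (K+1)) → ℝ) : Prop :=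
  (∀ a, Measurable (p a)) ∧ (∀ a x, 0 ≤ p a x) ∧ (∀ x, ∑ a, p a x = 1)

/-- Non-nullness: the infimum of the transition probabilities is positive. -/
def NonNull {K : ℕ} (p : Fin (K+1) → (ℕ → Fin (K+1)) → ℝ) : Prop :=
  ∃ ε > (0:ℝ), ∀ a x, ε ≤ p a x

/-- `β` is a continuity rate for `p` : pasts agreeing on the `k` most recent symbols
give transition probabilities within `β k`. -/
def ContRate {K : ℕ} (p : Fin (K+1) → (ℕ → Fin (K+1)) → ℝ) (β : ℕ → ℝ) : Prop :=
  ∀ k a (x y : ℕ → Fin (K+1)), (∀ i, i < k → x i = y i) → |p a x - p a y| ≤ β k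

/-- The (one-sided) stationary measure `P` is compatible with the family `p`. -/
def Compatible {K : ℕ} (p : Fin (K+1) → (ℕ → Fin (K+1)) → ℝ)
    (P : Measure (ℕ → Fin (K+1))) : Prop :=
  ∀ f : (ℕ → Fin (K+1)) → ℝ, Continuous f →
    ∫ z, f z ∂P = ∫ x, (∑ a, p a x * f (consP a x)) ∂(P.map shiftP)

/-- The endpoints `η_0 = 0 < η_1 < … < η_𝒦 = 1` of the monotonicity intervals,
`η_j = h(𝒦_{-∞}^{-1} j)` for `1 ≤ j ≤ 𝒦 - 1` (here `𝒦 = K + 1`). -/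
noncomputable def eta {K : ℕ} (P : Measure (ℕ → Fin (K+1))) : ℕ → ℝ :=
  fun j => if h : 0 < j ∧ j < K + 1 then
      hmap P (withTail (Fin.last K) ⟨j - 1, by omega⟩)
    else if j = 0 then 0 else 1

/-! A cylinder strictly between `x` and `y` is found by changing one coordinate beyond the
first disagreement `m` of `x < y`: if `x` is not eventually `𝒦`, raise some `x n` with `n > m`;
if `y` is not eventually `1`, lower some `y n` with `n > m`. Such a cylinder lies in `J(y) \ J(x)`
and has positive mass. -/

namespace PastSeq

variable {K : ℕ}

lemma lexLt_trans {x y z : ℕ → Fin (K+1)} (hxy : lexLt x y) (hyz : lexLt y z) :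
    lexLt x z := by
  obtain ⟨m₁, hagree₁, hlt₁⟩ := hxy
  obtain ⟨m₂, hagree₂, hlt₂⟩ := hyz
  rcases lt_trichotomy m₁ m₂ with h | rfl | h
  · exact ⟨m₁, fun i hi => (hagree₁ i hi).trans (hagree₂ i (hi.trans h)),
      hagree₂ m₁ h ▸ hlt₁⟩
  · exact ⟨m₁, fun i hi => (hagree₁ i hi).trans (hagree₂ i hi), hlt₁.trans hlt₂⟩
  · exact ⟨m₂, fun i hi => (hagree₁ i (hi.trans h)).trans (hagree₂ i hi),
      (hagree₁ m₂ h).symm ▸ hlt₂⟩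

lemma lexLe_trans_lexLt {x y z : ℕ → Fin (K+1)} (hxy : lexLe x y) (hyz : lexLt y z) :
    lexLt x z := by
  rcases hxy with rfl | hxy
  exacts [hyz, lexLt_trans hxy hyz]

lemma not_lexLe_of_lexLt {x y : ℕ → Fin (K+1)} (hxy : lexLt x y) : ¬ lexLe y x := by
  intro hyx
  obtain ⟨m, -, hlt⟩ := lexLe_trans_lexLt hyx hxy
  exact lt_irrefl _ hlt

lemma lexLt_of_agree_le {m : ℕ} {x y x' y' : ℕ → Fin (K+1)} (hx : ∀ i ≤ m, x' i = x i)
    (hy : ∀ i ≤ m, y' i = y i) (hagree : ∀ i < m, x i = y i) (hlt : x m < y m) :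
    lexLt x' y' :=
  ⟨m, fun i hi => by rw [hx i hi.le, hy i hi.le, hagree i hi], by rwa [hx m le_rfl, hy m le_rfl]⟩

def cylinder (n : ℕ) (w : ℕ → Fin (K+1)) : Set (ℕ → Fin (K+1)) := {z | ∀ i ≤ n, z i = w i}

lemma measurableSet_cylinder (n : ℕ) (w : ℕ → Fin (K+1)) : MeasurableSet (cylinder n w) := by
  have : cylinder n w = (Set.Iic n).pi fun i => {w i} := by
    ext z; simp [cylinder]
  rw [this]
  exact MeasurableSet.pi (Set.to_countable _) fun i _ => measurableSet_singleton (w i)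

lemma exists_cylinder_between_of_not_tail_last {x y : ℕ → Fin (K+1)} (hxy : lexLt x y)
    (hx : ¬ ∃ m, ∀ n, m ≤ n → x n = Fin.last K) :
    ∃ n w, cylinder n w ⊆ {z | lexLt x z ∧ lexLt z y} := by
  obtain ⟨m, hagree, hlt⟩ := hxy
  push Not at hx
  obtain ⟨n, hmn, hne⟩ := hx (m + 1)
  refine ⟨n, Function.update x n (x n + 1), fun z hz => ⟨?_, ?_⟩⟩
  · refine lexLt_of_agree_le (fun _ _ => rfl) hz (fun i hi => ?_) ?_
    · rw [Function.update_of_ne hi.ne]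
    · rw [Function.update_self]
      exact Fin.lt_add_one_iff.2 (Fin.lt_last_iff_ne_last.2 hne)
  · refine lexLt_of_agree_le (fun i hi => ?_) (fun _ _ => rfl) hagree hlt
    rw [hz i (by omega), Function.update_of_ne (by omega)]

lemma exists_cylinder_between_of_not_tail_zero {x y : ℕ → Fin (K+1)} (hxy : lexLt x y)
    (hy : ¬ ∃ m, ∀ n, m ≤ n → y n = 0) :
    ∃ n w, cylinder n w ⊆ {z | lexLt x z ∧ lexLt z y} := by
  obtain ⟨m, hagree, hlt⟩ := hxy
  push Not at hy
  obtain ⟨n, hmn, hne⟩ := hy (m + 1)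
  refine ⟨n, Function.update y n (y n - 1), fun z hz => ⟨?_, ?_⟩⟩
  · refine lexLt_of_agree_le (fun _ _ => rfl) (fun i hi => ?_) hagree hlt
    rw [hz i (by omega), Function.update_of_ne (by omega)]
  · refine lexLt_of_agree_le hz (fun _ _ => rfl) (fun i hi => ?_) ?_
    · rw [Function.update_of_ne hi.ne]
    · rw [Function.update_self]
      exact Fin.sub_one_lt_iff.2 (Fin.pos_iff_ne_zero.2 hne)

lemma exists_cylinder_between {x y : ℕ → Fin (K+1)} (hxy : lexLt x y)
    (hQ : x ∉ exceptional K ∨ y ∉ exceptional K) :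
    ∃ n w, cylinder n w ⊆ {z | lexLt x z ∧ lexLt z y} := by
  rcases hQ with hx | hy
  · exact exists_cylinder_between_of_not_tail_last hxy fun h => hx (Or.inl h)
  · exact exists_cylinder_between_of_not_tail_zero hxy fun h => hy (Or.inr h)

end PastSeq

lemma MeasureTheory.measure_lt_of_disjoint_union_subset {α : Type*} [MeasurableSpace α]
    {μ : Measure α} {s t u : Set α} (hu : MeasurableSet u) (hsut : s ∪ u ⊆ t)
    (hsu : Disjoint s u) (hs : μ s ≠ ⊤) (hu_pos : 0 < μ u) : μ s < μ t :=
  calc μ s < μ s + μ u := ENNReal.lt_add_right hs hu_pos.ne'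
    _ = μ (s ∪ u) := (measure_union hsu hu).symm
    _ ≤ μ t := measure_mono hsut

open PastSeq in
/-- If `P` gives positive measure to every cylinder, then `h` is
strictly increasing outside the exceptional set `𝒬`: if `x < y` lexicographically and
`x ∉ 𝒬` or `y ∉ 𝒬`, then `h(x) < h(y)`. -/
theorem hmap_strictMono (K : ℕ) (P : Measure (ℕ → Fin (K+1))) [IsProbabilityMeasure P]
    (hP : PosCylinders P) :
    ∀ x y : ℕ → Fin (K+1), lexLt x y →
      (x ∉ exceptional K ∨ y ∉ exceptional K) → hmap P x < hmap P y := by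
  intro x y hxy hQ
  obtain ⟨n, w, hw⟩ := exists_cylinder_between hxy hQ
  have hsub : lowerSet x ∪ cylinder n w ⊆ lowerSet y := by
    rintro z (hz | hz)
    exacts [Or.inr (lexLe_trans_lexLt hz hxy), Or.inr (hw hz).2]
  have hdisj : Disjoint (lowerSet x) (cylinder n w) :=
    Set.disjoint_right.2 fun z hz => not_lexLe_of_lexLt (hw hz).1
  exact (ENNReal.toReal_lt_toReal (measure_ne_top P _) (measure_ne_top P _)).2 <|
    measure_lt_of_disjoint_union_subset (measurableSet_cylinder n w) hsub hdisj
      (measure_ne_top P _) (hP n w)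
end

section
/- With the notation above, h identifies exactly the exceptional pairs: for any a in {1,...,K-1}, h(K_{-infty}^{-1} a) = h(1_{-infty}^{-1}(a+1)), and for any k >= 0 and any finite word x_{-k}^0, h(K_{-infty}^{-(k+2)} a x_{-k}^0) = h(1_{-infty}^{-(k+2)} (a+1) x_{-k}^0), provided P has no atoms. -/
open MeasureTheory

lemma lowerSet_key {K N : ℕ} {X Y : ℕ → Fin (K+1)}
    (hlt : X N < Y N) (hagree : ∀ i, i < N → X i = Y i)
    (hsucc : ∀ b : Fin (K+1), b < Y N → b ≤ X N)
    (hX : ∀ i, N < i → X i = Fin.last K) (hY : ∀ i, N < i → Y i = 0) :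
    lowerSet Y = lowerSet X ∪ {Y} := by
  ext y
  constructor
  · rintro (rfl | ⟨m, hm, hmlt⟩)
    · exact Or.inr rfl
    · have hmN : m ≤ N := by
        by_contra h
        push_neg at h
        rw [hY m h] at hmlt
        exact absurd hmlt (by simp)
      rcases lt_or_eq_of_le hmN with h | rfl
      · refine Or.inl (Or.inr ⟨m, fun i hi => ?_, ?_⟩)
        · rw [hm i hi, ← hagree i (hi.trans h)]
        · rw [← hagree m h] at hmlt; exact hmlt
      · have hyN : y m ≤ X m := hsucc _ hmlt
        rcases lt_or_eq_of_le hyN with h | h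
        · exact Or.inl (Or.inr ⟨m, fun i hi => (hm i hi).trans (hagree i hi).symm, h⟩)
        · by_cases hyX : y = X
          · exact Or.inl (Or.inl hyX)
          · have hex : ∃ n, y n ≠ X n := by
              by_contra hc; push_neg at hc; exact hyX (funext hc)
            classical
            set m' := Nat.find hex with hm'
            have hne : y m' ≠ X m' := Nat.find_spec hex
            have hpre : ∀ i, i < m' → y i = X i := fun i hi => by
              by_contra hc; exact absurd (Nat.find_le hc) (not_le.mpr hi)
            have hm'N : m < m' := by
              rcases lt_or_ge m m' with h' | h'
              · exact h'
              · exfalso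
                rcases lt_or_eq_of_le h' with h'' | rfl
                · exact hne ((hm m' h'').trans (hagree m' h'').symm)
                · exact hne h
            refine Or.inl (Or.inr ⟨m', hpre, ?_⟩)
            rw [hX m' hm'N]
            rw [hX m' hm'N] at hne
            exact lt_of_le_of_ne (Fin.le_last _) hne
  · rintro ((rfl | ⟨m, hm, hmlt⟩) | rfl)
    · exact Or.inr ⟨N, fun i hi => hagree i hi, hlt⟩
    · rcases lt_trichotomy m N with h | rfl | h
      · exact Or.inr ⟨m, fun i hi => (hm i hi).trans (hagree i (hi.trans h)), by
          rwa [← hagree m h]⟩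
      · exact Or.inr ⟨m, fun i hi => (hm i hi).trans (hagree i hi), hmlt.trans hlt⟩
      · exact Or.inr ⟨N, fun i hi => (hm i (hi.trans h)).trans (hagree i hi), by
          rw [hm N h]; exact hlt⟩
    · exact Or.inl rfl

lemma hmap_key {K N : ℕ} (P : Measure (ℕ → Fin (K+1))) (hP : Atomless P)
    {X Y : ℕ → Fin (K+1)}
    (hlt : X N < Y N) (hagree : ∀ i, i < N → X i = Y i)
    (hsucc : ∀ b : Fin (K+1), b < Y N → b ≤ X N)
    (hX : ∀ i, N < i → X i = Fin.last K) (hY : ∀ i, N < i → Y i = 0) :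
    hmap P X = hmap P Y := by
  unfold hmap
  congr 1
  rw [lowerSet_key hlt hagree hsucc hX hY]
  refine le_antisymm (measure_mono Set.subset_union_left) ?_
  calc P (lowerSet X ∪ {Y}) ≤ P (lowerSet X) + P {Y} := measure_union_le _ _
    _ = P (lowerSet X) := by rw [hP Y, add_zero]

/-- `h` identifies exactly the exceptional pairs: for a symbol `a`
which is not the largest one, `h(𝒦_{-∞}^{-1} a) = h(1_{-∞}^{-1} (a+1))`, and for every
`k ≥ 0` and finite word `z_{-k}^0`,
`h(𝒦_{-∞}^{-(k+2)} a z_{-k}^0) = h(1_{-∞}^{-(k+2)} (a+1) z_{-k}^0)`,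
provided `P` has no atoms. -/
theorem hmap_exceptional_pairs (K : ℕ) (P : Measure (ℕ → Fin (K+1)))
    [IsProbabilityMeasure P] (hP : Atomless P)
    (a : Fin (K+1)) (ha : (a : ℕ) < K) :
    hmap P (withTail (Fin.last K) a) = hmap P (withTail 0 ⟨(a : ℕ) + 1, by omega⟩) ∧
    ∀ (k : ℕ) (z : ℕ → Fin (K+1)),
      hmap P (withSuffix (Fin.last K) a k z)
        = hmap P (withSuffix 0 ⟨(a : ℕ) + 1, by omega⟩ k z) := by
  
  constructor
  · refine hmap_key P hP (N := 0) ?_ ?_ ?_ ?_ ?_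
    · simp [withTail, Fin.lt_def]
    · omega
    · intro b hb
      rw [Fin.lt_def] at hb
      rw [Fin.le_def]
      simp only [withTail, eq_self_iff_true, if_true, Fin.val_mk] at hb ⊢
      omega
    · intro i hi; unfold withTail; rw [if_neg (by omega)]
    · intro i hi; unfold withTail; rw [if_neg (by omega)]
  · intro k z
    refine hmap_key P hP (N := k + 1) ?_ ?_ ?_ ?_ ?_
    · simp [withSuffix, Fin.lt_def]
    · intro i hi; simp [withSuffix, Nat.lt_succ_iff.mp hi]
    · intro b hb
      rw [Fin.lt_def] at hb
      rw [Fin.le_def]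
      have h1 : ¬ (k + 1 ≤ k) := by omega
      simp only [withSuffix, if_neg h1, eq_self_iff_true, if_true, Fin.val_mk] at hb ⊢
      omega
    · intro i hi; unfold withSuffix; rw [if_neg (by omega), if_neg (by omega)]
    · intro i hi; unfold withSuffix; rw [if_neg (by omega), if_neg (by omega)]
end

section
/- With the notation above, h is injective outside the countable exceptional set Q, the preimage of any point of h(Q) has cardinality at most two, and the inverse map h^{-1} is continuous on [0,1] \ h(Q). -/
open MeasureTheory

/-! Order the sequences lexicographically. Then `h` is monotone, and `h x < h y` whenever a
cylinder, which has positive mass, fits strictly between `x < y`. The only pairs admitting no such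
cylinder are the lexicographic successors `x = w a 𝒦 𝒦 …`, `y = w (a+1) 1 1 …` (read from
position `0` leftwards); both lie in `𝒬`, and `h x = h y` since `P` has no atoms. This gives
injectivity off `𝒬`, and fibres of size at most two because no sequence ends both in `𝒦 𝒦 …`
and in `1 1 …`. As `P` is atomless, `h` is continuous on the compact sequence space, and a gap
in its image would again leave room for a cylinder, so `h` maps onto `[0,1]`. Finally the
cylinder of length `n` around `x ∉ 𝒬` is the lexicographic interval between `x` padded with
`1`s and `x` padded with `𝒦`s; both ends lie in `𝒬`, so their images lie strictly on either
side of `h x`, and every preimage of a point close to `h x` stays in the cylinder. -/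

open Filter Topology Function

section LexOrder

variable {α : Type*} [LinearOrder α]

lemma toLex_lt_toLex_iff_exists {x y : ℕ → α} :
    toLex x < toLex y ↔ ∃ m, (∀ i < m, x i = y i) ∧ x m < y m :=
  Iff.rfl

lemma mem_cylinder_of_toLex_le_of_le {c x y w : ℕ → α} {n : ℕ} (hx : x ∈ PiNat.cylinder c n)
    (hy : y ∈ PiNat.cylinder c n) (hxw : toLex x ≤ toLex w) (hwy : toLex w ≤ toLex y) :
    w ∈ PiNat.cylinder c n := by
  intro i
  induction i using Nat.strong_induction_on with
  | _ i ih =>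
    intro hi
    have hxi : x i ≤ w i := Pi.apply_le_of_toLex hxw fun j hj =>
      (hx j (hj.trans hi)).trans (ih j hj (hj.trans hi)).symm
    have hwi : w i ≤ y i := Pi.apply_le_of_toLex hwy fun j hj =>
      (ih j hj (hj.trans hi)).trans (hy j (hj.trans hi)).symm
    exact le_antisymm (hwi.trans_eq (hy i hi)) ((hx i hi).symm.trans_le hxi)

lemma exists_le_lt_of_toLex_lt_of_mem_cylinder {x y : ℕ → α} {n : ℕ}
    (hxy : toLex x < toLex y) (hy : y ∈ PiNat.cylinder x n) : ∃ j ≥ n, x j < y j := by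
  obtain ⟨j, -, hj⟩ := hxy
  refine ⟨j, not_lt.1 fun hjn => ?_, hj⟩
  exact hj.ne (hy j hjn).symm

lemma toLex_lt_of_mem_cylinder {x c z : ℕ → α} {n : ℕ} (hxc : toLex x < toLex c)
    (hx : x ∉ PiNat.cylinder c n) (hz : z ∈ PiNat.cylinder c n) : toLex x < toLex z := by
  obtain ⟨m, hagree, hlt⟩ := toLex_lt_toLex_iff_exists.1 hxc
  have hmn : m < n := not_le.1 fun hnm => hx fun i hi => hagree i (hi.trans_le hnm)
  exact toLex_lt_toLex_iff_exists.2
    ⟨m, fun i hi => (hagree i hi).trans (hz i (hi.trans hmn)).symm, (hz m hmn).symm ▸ hlt⟩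

lemma toLex_lt_of_mem_cylinder' {c y z : ℕ → α} {n : ℕ} (hcy : toLex c < toLex y)
    (hy : y ∉ PiNat.cylinder c n) (hz : z ∈ PiNat.cylinder c n) : toLex z < toLex y := by
  obtain ⟨m, hagree, hlt⟩ := toLex_lt_toLex_iff_exists.1 hcy
  have hmn : m < n := not_le.1 fun hnm => hy fun i hi => (hagree i (hi.trans_le hnm)).symm
  exact toLex_lt_toLex_iff_exists.2
    ⟨m, fun i hi => (hz i (hi.trans hmn)).trans (hagree i hi), (hz m hmn).symm ▸ hlt⟩

def LexAdj (x y : ℕ → α) : Prop :=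
  ∃ m, (∀ i < m, x i = y i) ∧ x m ⋖ y m ∧ ∀ n > m, IsMax (x n) ∧ IsMin (y n)

lemma LexAdj.covBy {x y : ℕ → α} (h : LexAdj x y) : toLex x ⋖ toLex y := by
  obtain ⟨m, hagree, hcov, htail⟩ := h
  refine ⟨⟨m, hagree, hcov.lt⟩, fun w hxw hwy => ?_⟩
  have hw : w ∈ PiNat.cylinder x m := mem_cylinder_of_toLex_le_of_le
    (PiNat.self_mem_cylinder x m) (fun i hi => (hagree i hi).symm) hxw.le hwy.le
  have hxm : x m ≤ w m := Pi.apply_le_of_toLex hxw.le fun j hj => (hw j hj).symm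
  have hwm : w m ≤ y m := Pi.apply_le_of_toLex hwy.le fun j hj => (hw j hj).trans (hagree j hj)
  rcases hcov.eq_or_eq hxm hwm with hwx | hwy'
  · obtain ⟨j, hj, hlt⟩ := exists_le_lt_of_toLex_lt_of_mem_cylinder hxw
      (n := m + 1) fun i hi => (Nat.lt_succ_iff_lt_or_eq.1 hi).elim (hw i) (· ▸ hwx)
    exact (htail j hj).1.not_lt hlt
  · obtain ⟨j, hj, hlt⟩ := exists_le_lt_of_toLex_lt_of_mem_cylinder hwy
      (n := m + 1) fun i hi => (Nat.lt_succ_iff_lt_or_eq.1 hi).elim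
        (fun hi => ((hw i hi).trans (hagree i hi)).symm) (· ▸ hwy'.symm)
    exact (htail j hj).2.not_lt hlt

lemma LexAdj.not_lexAdj [Nontrivial α] {x y z : ℕ → α} (hxy : LexAdj x y) :
    ¬ LexAdj y z := by
  rintro ⟨m', -, -, htail'⟩
  obtain ⟨m, -, -, htail⟩ := hxy
  have hmin : IsMin (y (m + m' + 1)) := (htail _ (by omega)).2
  have hmax : IsMax (y (m + m' + 1)) := (htail' _ (by omega)).1
  obtain ⟨b, hb⟩ := exists_ne (y (m + m' + 1))
  rcases le_total b (y (m + m' + 1)) with h | h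
  · exact hb (le_antisymm h (hmin h))
  · exact hb (le_antisymm (hmax h) h)

lemma exists_cylinder_subset_Ioo_of_not_lexAdj {x y : ℕ → α} (hxy : toLex x < toLex y)
    (hadj : ¬ LexAdj x y) :
    ∃ c n, ∀ z ∈ PiNat.cylinder c n, toLex x < toLex z ∧ toLex z < toLex y := by
  obtain ⟨m, hagree, hlt⟩ := toLex_lt_toLex_iff_exists.1 hxy
  by_cases hcov : x m ⋖ y m
  swap
  · obtain ⟨a, hxa, hay⟩ := (not_covBy_iff hlt).1 hcov
    refine ⟨update x m a, m + 1, fun z hz => ⟨?_, ?_⟩⟩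
    · exact toLex_lt_of_mem_cylinder (Pi.lt_toLex_update_self_iff.2 hxa)
        (fun h => hxa.ne ((h m m.lt_succ_self).trans (update_self ..))) hz
    · refine toLex_lt_of_mem_cylinder' (toLex_lt_toLex_iff_exists.2 ⟨m, fun i hi => ?_, ?_⟩)
        (fun h => hay.ne' ((h m m.lt_succ_self).trans (update_self ..))) hz
      · rw [update_of_ne hi.ne]; exact hagree i hi
      · rwa [update_self]
  by_cases hx : ∃ n > m, ¬ IsMax (x n)
  · obtain ⟨n, hmn, hn⟩ := hx
    obtain ⟨a, hxa⟩ := not_isMax_iff.1 hn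
    refine ⟨update x n a, n + 1, fun z hz => ⟨?_, ?_⟩⟩
    · exact toLex_lt_of_mem_cylinder (Pi.lt_toLex_update_self_iff.2 hxa)
        (fun h => hxa.ne ((h n n.lt_succ_self).trans (update_self ..))) hz
    · refine toLex_lt_of_mem_cylinder' (toLex_lt_toLex_iff_exists.2 ⟨m, fun i hi => ?_, ?_⟩)
        (fun h => hlt.ne' ((h m (by omega)).trans (update_of_ne hmn.ne ..))) hz
      · rw [update_of_ne (hi.trans hmn).ne]; exact hagree i hi
      · rwa [update_of_ne hmn.ne]
  by_cases hy : ∃ n > m, ¬ IsMin (y n)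
  · obtain ⟨n, hmn, hn⟩ := hy
    obtain ⟨a, hay⟩ := not_isMin_iff.1 hn
    refine ⟨update y n a, n + 1, fun z hz => ⟨?_, ?_⟩⟩
    · refine toLex_lt_of_mem_cylinder (toLex_lt_toLex_iff_exists.2 ⟨m, fun i hi => ?_, ?_⟩)
        (fun h => hlt.ne ((h m (by omega)).trans (update_of_ne hmn.ne ..))) hz
      · rw [update_of_ne (hi.trans hmn).ne]; exact hagree i hi
      · rwa [update_of_ne hmn.ne]
    · exact toLex_lt_of_mem_cylinder' (Pi.toLex_update_lt_self_iff.2 hay)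
        (fun h => hay.ne' ((h n n.lt_succ_self).trans (update_self ..))) hz
  push Not at hx hy
  exact absurd ⟨m, hagree, hcov, fun n hn => ⟨hx n hn, hy n hn⟩⟩ hadj

def cylinderBot [OrderBot α] (x : ℕ → α) (n : ℕ) : ℕ → α :=
  fun i => if i < n then x i else ⊥

def cylinderTop [OrderTop α] (x : ℕ → α) (n : ℕ) : ℕ → α :=
  fun i => if i < n then x i else ⊤

lemma cylinderBot_mem_cylinder [OrderBot α] (x : ℕ → α) (n : ℕ) :
    cylinderBot x n ∈ PiNat.cylinder x n :=
  fun _ hi => if_pos hi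

lemma cylinderTop_mem_cylinder [OrderTop α] (x : ℕ → α) (n : ℕ) :
    cylinderTop x n ∈ PiNat.cylinder x n :=
  fun _ hi => if_pos hi

lemma toLex_cylinderBot_le [OrderBot α] (x : ℕ → α) (n : ℕ) :
    toLex (cylinderBot x n) ≤ toLex x :=
  Pi.toLex_monotone fun i => by unfold cylinderBot; split_ifs <;> simp

lemma toLex_le_cylinderTop [OrderTop α] (x : ℕ → α) (n : ℕ) :
    toLex x ≤ toLex (cylinderTop x n) :=
  Pi.toLex_monotone fun i => by unfold cylinderTop; split_ifs <;> simp

lemma exists_subset_pair_of_forall_not_lt_lt [Nonempty α] {s : Set α}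
    (h : ∀ a ∈ s, ∀ b ∈ s, ∀ c ∈ s, a < b → ¬ b < c) : ∃ a b, s ⊆ {a, b} := by
  rcases s.subsingleton_or_nontrivial with hs | ⟨a, ha, b, hb, hab⟩
  · rcases hs.eq_empty_or_singleton with rfl | ⟨a, rfl⟩
    · exact ⟨Classical.arbitrary α, Classical.arbitrary α, Set.empty_subset _⟩
    · exact ⟨a, a, Set.subset_insert _ _⟩
  wlog hlt : a < b generalizing a b
  · obtain ⟨x, y, hxy⟩ := this b hb a ha hab.symm (hab.lt_or_gt.resolve_left hlt)
    exact ⟨x, y, hxy⟩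
  refine ⟨a, b, fun c hc => ?_⟩
  rcases lt_trichotomy c a with hca | rfl | hac
  · exact absurd hlt (h c hc a ha b hb hca)
  · exact Or.inl rfl
  rcases lt_trichotomy c b with hcb | rfl | hbc
  · exact absurd hcb (h a ha c hc b hb hac)
  · exact Or.inr rfl
  · exact absurd hbc (h a ha b hb c hc hlt)

end LexOrder

section Sequences

variable {K : ℕ}

lemma mem_lowerSet_iff {x y : ℕ → Fin (K+1)} : y ∈ lowerSet x ↔ toLex y ≤ toLex x :=
  (le_iff_eq_or_lt (a := toLex y) (b := toLex x)).symm

lemma LexAdj.left_mem_exceptional {x y : ℕ → Fin (K+1)} (h : LexAdj x y) :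
    x ∈ exceptional K := by
  obtain ⟨m, -, -, htail⟩ := h
  exact Or.inl ⟨m + 1, fun n hn => isMax_iff_eq_top.1 (htail n hn).1⟩

lemma LexAdj.right_mem_exceptional {x y : ℕ → Fin (K+1)} (h : LexAdj x y) :
    y ∈ exceptional K := by
  obtain ⟨m, -, -, htail⟩ := h
  exact Or.inr ⟨m + 1, fun n hn => isMin_iff_eq_bot.1 (htail n hn).2⟩

lemma cylinderBot_mem_exceptional (x : ℕ → Fin (K+1)) (n : ℕ) :
    cylinderBot x n ∈ exceptional K :=
  Or.inr ⟨n, fun _ hi => if_neg (not_lt.2 hi)⟩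

lemma cylinderTop_mem_exceptional (x : ℕ → Fin (K+1)) (n : ℕ) :
    cylinderTop x n ∈ exceptional K :=
  Or.inl ⟨n, fun _ hi => if_neg (not_lt.2 hi)⟩

lemma exists_notMem_exceptional_mem_cylinder [Nontrivial (Fin (K+1))] (c : ℕ → Fin (K+1))
    (n : ℕ) : ∃ z ∉ exceptional K, z ∈ PiNat.cylinder c n := by
  refine ⟨fun i => if i < n then c i else if Even i then 0 else Fin.last K, ?_,
    fun i hi => if_pos hi⟩
  have hK := Fin.nontrivial_iff_two_le.1 ‹_›
  rintro (⟨m, hm⟩ | ⟨m, hm⟩)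
  · have := hm (2 * (m + n)) (by omega)
    simp [show ¬ 2 * (m + n) < n by omega] at this
    omega
  · have := hm (2 * (m + n) + 1) (by omega)
    simp [show ¬ 2 * (m + n) + 1 < n by omega] at this
    omega

variable {P : Measure (ℕ → Fin (K+1))}

lemma Atomless.nontrivial [IsProbabilityMeasure P] (hP : Atomless P) :
    Nontrivial (Fin (K+1)) := by
  by_contra h
  rw [not_nontrivial_iff_subsingleton] at h
  have huniv : ({0} : Set (ℕ → Fin (K+1))) = Set.univ :=
    Set.eq_univ_of_forall fun z => Subsingleton.elim z 0
  simpa [huniv] using hP 0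

lemma PosCylinders.measure_cylinder_pos (hP' : PosCylinders P) (c : ℕ → Fin (K+1)) (n : ℕ) :
    0 < P (PiNat.cylinder c n) :=
  (hP' n c).trans_le (measure_mono fun _ hz i hi => hz i hi.le)

section Finite

variable [IsFiniteMeasure P]

lemma hmap_le_hmap {x y : ℕ → Fin (K+1)} (h : toLex x ≤ toLex y) :
    hmap P x ≤ hmap P y :=
  measureReal_mono fun _ hz => (mem_lowerSet_iff.1 hz).trans h

lemma hmap_lt_hmap_of_cylinder_subset (hP' : PosCylinders P)
    {x y c : ℕ → Fin (K+1)} {n : ℕ}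
    (h : ∀ z ∈ PiNat.cylinder c n, toLex x < toLex z ∧ toLex z < toLex y) :
    hmap P x < hmap P y := by
  have hdisj : Disjoint (lowerSet x) (PiNat.cylinder c n) :=
    Set.disjoint_left.2 fun z hzx hzc => (h z hzc).1.not_ge (mem_lowerSet_iff.1 hzx)
  have hsub : lowerSet x ∪ PiNat.cylinder c n ⊆ lowerSet y := by
    have hxy := (h c (PiNat.self_mem_cylinder c n)).1.trans (h c (PiNat.self_mem_cylinder c n)).2
    refine Set.union_subset (fun z hz => ?_) fun z hz => mem_lowerSet_iff.2 (h z hz).2.le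
    exact mem_lowerSet_iff.2 ((mem_lowerSet_iff.1 hz).trans hxy.le)
  have hpos : 0 < P.real (PiNat.cylinder c n) :=
    ENNReal.toReal_pos (hP'.measure_cylinder_pos c n).ne' (measure_ne_top _ _)
  calc hmap P x < P.real (lowerSet x) + P.real (PiNat.cylinder c n) := lt_add_of_pos_right _ hpos
    _ = P.real (lowerSet x ∪ PiNat.cylinder c n) :=
      (measureReal_union hdisj (PiNat.isOpen_cylinder _ c n).measurableSet).symm
    _ ≤ hmap P y := measureReal_mono hsub

lemma hmap_le_add_of_mem_cylinder {x z : ℕ → Fin (K+1)} {n : ℕ}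
    (hz : z ∈ PiNat.cylinder x n) : hmap P z ≤ hmap P x + P.real (PiNat.cylinder x n) := by
  have hsub : lowerSet z ⊆ lowerSet x ∪ PiNat.cylinder x n := fun w hw =>
    (le_or_gt (toLex w) (toLex x)).imp mem_lowerSet_iff.2 fun hxw =>
      mem_cylinder_of_toLex_le_of_le (PiNat.self_mem_cylinder x n) hz hxw.le
        (mem_lowerSet_iff.1 hw)
  exact (measureReal_mono hsub).trans (measureReal_union_le _ _)

lemma abs_hmap_sub_le {x z : ℕ → Fin (K+1)} {n : ℕ}
    (hz : z ∈ PiNat.cylinder x n) : |hmap P z - hmap P x| ≤ P.real (PiNat.cylinder x n) := by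
  have hzx := hmap_le_add_of_mem_cylinder (P := P) hz
  have hxz := hmap_le_add_of_mem_cylinder (P := P) ((PiNat.mem_cylinder_comm x z n).1 hz)
  rw [PiNat.mem_cylinder_iff_eq.1 hz] at hxz
  exact abs_sub_le_iff.2 ⟨by linarith, by linarith⟩

lemma tendsto_measureReal_cylinder (hP : Atomless P) (x : ℕ → Fin (K+1)) :
    Tendsto (fun n => P.real (PiNat.cylinder x n)) atTop (𝓝 0) := by
  have hinter : ⋂ n, PiNat.cylinder x n = {x} := Set.eq_singleton_iff_unique_mem.2
    ⟨Set.mem_iInter.2 (PiNat.self_mem_cylinder x), fun z hz =>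
      funext fun i => Set.mem_iInter.1 hz (i + 1) i i.lt_succ_self⟩
  have h := tendsto_measure_iInter_atTop (μ := P)
    (fun n => (PiNat.isOpen_cylinder _ x n).measurableSet.nullMeasurableSet)
    (fun _ _ hmn => PiNat.cylinder_anti x hmn) ⟨0, measure_ne_top _ _⟩
  rw [hinter, hP x] at h
  have := (ENNReal.tendsto_toReal ENNReal.zero_ne_top).comp h
  rwa [ENNReal.toReal_zero] at this

lemma hmap_continuous (hP : Atomless P) : Continuous (hmap P) := by
  refine continuous_iff_continuousAt.2 fun x => Metric.tendsto_nhds.2 fun ε hε => ?_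
  obtain ⟨n, hn⟩ := ((tendsto_measureReal_cylinder hP x).eventually (gt_mem_nhds hε)).exists
  filter_upwards [(PiNat.isOpen_cylinder _ x n).mem_nhds (PiNat.self_mem_cylinder x n)] with z hz
  exact (Real.dist_eq _ _).trans_lt ((abs_hmap_sub_le hz).trans_lt hn)

lemma hmap_eq_of_covBy (hP : Atomless P) {x y : ℕ → Fin (K+1)}
    (h : toLex x ⋖ toLex y) : hmap P x = hmap P y := by
  have hsub : lowerSet y ⊆ lowerSet x ∪ {y} := fun w hw =>
    (eq_or_lt_of_le (mem_lowerSet_iff.1 hw)).symm.imp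
      (fun hlt => mem_lowerSet_iff.2 (h.le_of_lt hlt)) id
  have hy : P.real {y} = 0 := by simp [Measure.real, hP y]
  refine le_antisymm (hmap_le_hmap h.le) ((measureReal_mono hsub).trans ?_)
  exact (measureReal_union_le _ _).trans_eq (by rw [hy, add_zero]; rfl)

lemma hmap_lt_hmap_of_not_lexAdj (hP' : PosCylinders P) {x y : ℕ → Fin (K+1)}
    (hxy : toLex x < toLex y) (h : ¬ LexAdj x y) : hmap P x < hmap P y :=
  have ⟨_, _, hc⟩ := exists_cylinder_subset_Ioo_of_not_lexAdj hxy h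
  hmap_lt_hmap_of_cylinder_subset hP' hc

lemma lexAdj_of_hmap_eq (hP' : PosCylinders P) {x y : ℕ → Fin (K+1)}
    (hxy : toLex x < toLex y) (h : hmap P x = hmap P y) : LexAdj x y :=
  by_contra fun hadj => (hmap_lt_hmap_of_not_lexAdj hP' hxy hadj).ne h

lemma hmap_lt_hmap (hP' : PosCylinders P) {x y : ℕ → Fin (K+1)} (hxy : toLex x < toLex y)
    (hQ : x ∉ exceptional K ∨ y ∉ exceptional K) : hmap P x < hmap P y :=
  hmap_lt_hmap_of_not_lexAdj hP' hxy fun h =>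
    hQ.elim (· h.left_mem_exceptional) (· h.right_mem_exceptional)

lemma hmap_injOn (hP' : PosCylinders P) : Set.InjOn (hmap P) (exceptional K)ᶜ := by
  intro x hx y hy hxy
  by_contra hne
  rcases lt_or_gt_of_ne (toLex.injective.ne hne) with h | h
  · exact (hmap_lt_hmap hP' h (Or.inl hx)).ne hxy
  · exact (hmap_lt_hmap hP' h (Or.inl hy)).ne' hxy

lemma exists_preimage_hmap_subset_pair [Nontrivial (Fin (K+1))] (hP' : PosCylinders P) (t : ℝ) :
    ∃ x y : ℕ → Fin (K+1), hmap P ⁻¹' {t} ⊆ {x, y} := by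
  refine exists_subset_pair_of_forall_not_lt_lt (s := ofLex ⁻¹' (hmap P ⁻¹' {t}))
    fun a ha b hb c hc hab hbc => ?_
  exact (lexAdj_of_hmap_eq hP' hab (ha.trans hb.symm)).not_lexAdj
    (lexAdj_of_hmap_eq hP' hbc (hb.trans hc.symm))

lemma eventually_mem_cylinder_of_hmap_eq (hP' : PosCylinders P) {x : ℕ → Fin (K+1)}
    (hx : x ∉ exceptional K) (n : ℕ) :
    ∀ᶠ t in 𝓝 (hmap P x), ∀ z, hmap P z = t → z ∈ PiNat.cylinder x n := by
  have hlo : hmap P (cylinderBot x n) < hmap P x := hmap_lt_hmap hP'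
    ((toLex_cylinderBot_le x n).lt_of_ne fun h =>
      hx (toLex.injective h ▸ cylinderBot_mem_exceptional x n))
    (Or.inr hx)
  have hhi : hmap P x < hmap P (cylinderTop x n) := hmap_lt_hmap hP'
    ((toLex_le_cylinderTop x n).lt_of_ne fun h =>
      hx (toLex.injective h ▸ cylinderTop_mem_exceptional x n))
    (Or.inl hx)
  filter_upwards [Ioo_mem_nhds hlo hhi] with _ ht z rfl
  exact mem_cylinder_of_toLex_le_of_le (cylinderBot_mem_cylinder x n)
    (cylinderTop_mem_cylinder x n) (not_lt.1 fun h => (hmap_le_hmap h.le).not_gt ht.1)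
    (not_lt.1 fun h => (hmap_le_hmap h.le).not_gt ht.2)

lemma continuousOn_of_rightInvOn_hmap (hP' : PosCylinders P) {g : ℝ → ℕ → Fin (K+1)}
    {s : Set ℝ} (hg : ∀ t ∈ s, hmap P (g t) = t) (hs : Disjoint s (hmap P '' exceptional K)) :
    ContinuousOn g s := by
  intro t ht
  have hgt : g t ∉ exceptional K := fun h => hs.notMem_of_mem_left ht ⟨g t, h, hg t ht⟩
  refine tendsto_pi_nhds.2 fun i => tendsto_nhds_of_eventually_eq ?_
  have h := eventually_mem_cylinder_of_hmap_eq hP' hgt (i + 1)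
  rw [hg t ht] at h
  filter_upwards [nhdsWithin_le_nhds h, self_mem_nhdsWithin] with t' h' ht'
  exact h' (g t') (hg t' ht') i i.lt_succ_self

end Finite

lemma hmap_bot (hP : Atomless P) : hmap P ⊥ = 0 := by
  have h : lowerSet (⊥ : ℕ → Fin (K+1)) = {⊥} :=
    Set.ext fun _ => mem_lowerSet_iff.trans le_bot_iff
  simp [hmap, h, hP ⊥]

lemma hmap_top [IsProbabilityMeasure P] : hmap P ⊤ = 1 := by
  have h : lowerSet (⊤ : ℕ → Fin (K+1)) = Set.univ :=
    Set.eq_univ_of_forall fun _ => mem_lowerSet_iff.2 le_top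
  simp [hmap, h]

lemma hmap_surjOn [Nontrivial (Fin (K+1))] [IsProbabilityMeasure P] (hP : Atomless P)
    (hP' : PosCylinders P) : Set.SurjOn (hmap P) Set.univ (Set.Icc 0 1) := by
  intro t ⟨ht0, ht1⟩
  have hcont := hmap_continuous hP
  obtain ⟨x, hxt, hxmax⟩ := (isClosed_le hcont continuous_const).isCompact.exists_isMaxOn
    ⟨⊥, (hmap_bot hP).trans_le ht0⟩ hcont.continuousOn
  obtain ⟨y, hyt, hymin⟩ := (isClosed_le continuous_const hcont).isCompact.exists_isMinOn
    ⟨⊤, ht1.trans_eq hmap_top.symm⟩ hcont.continuousOn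
  by_contra hnot
  have hx : hmap P x < t := (hxt : hmap P x ≤ t).lt_of_ne fun h => hnot ⟨x, trivial, h⟩
  have hy : t < hmap P y := (hyt : t ≤ hmap P y).lt_of_ne' fun h => hnot ⟨y, trivial, h⟩
  have hxy : toLex x < toLex y := lt_of_not_ge fun h => (hmap_le_hmap h).not_gt (hx.trans hy)
  have hadj : ¬ LexAdj x y := fun h => (hx.trans hy).ne (hmap_eq_of_covBy hP h.covBy)
  obtain ⟨c, n, hc⟩ := exists_cylinder_subset_Ioo_of_not_lexAdj hxy hadj
  obtain ⟨z, hzQ, hz⟩ := exists_notMem_exceptional_mem_cylinder c n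
  rcases le_total (hmap P z) t with h | h
  · exact (hxmax h).not_gt (hmap_lt_hmap hP' (hc z hz).1 (Or.inr hzQ))
  · exact (hymin h).not_gt (hmap_lt_hmap hP' (hc z hz).2 (Or.inl hzQ))

end Sequences

/-- `h` is injective outside the countable exceptional set `𝒬`, the
preimage of any point of `h(𝒬)` has cardinality at most two, and the inverse map
`h⁻¹` is continuous on `[0,1] \ h(𝒬)`. -/
theorem hmap_injective_and_inverse_continuous (K : ℕ) (P : Measure (ℕ → Fin (K+1)))
    [IsProbabilityMeasure P] (hP : Atomless P) (hP' : PosCylinders P) :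
    (∀ x y : ℕ → Fin (K+1), x ∉ exceptional K → y ∉ exceptional K →
        hmap P x = hmap P y → x = y) ∧
    (∀ t ∈ hmap P '' exceptional K, ∃ x y : ℕ → Fin (K+1),
        hmap P ⁻¹' {t} ⊆ {x, y}) ∧
    (∃ g : ℝ → (ℕ → Fin (K+1)),
        (∀ t ∈ Set.Icc (0:ℝ) 1 \ hmap P '' exceptional K, hmap P (g t) = t) ∧
        ContinuousOn g (Set.Icc (0:ℝ) 1 \ hmap P '' exceptional K)) := by
  have := hP.nontrivial
  have hinv := (hmap_surjOn hP hP').rightInvOn_invFunOn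
  refine ⟨fun x y hx hy => hmap_injOn hP' hx hy,
    fun t _ => exists_preimage_hmap_subset_pair hP' t,
    invFunOn (hmap P) Set.univ, fun t ht => hinv ht.1, ?_⟩
  exact continuousOn_of_rightInvOn_hmap hP' (fun t ht => hinv ht.1) Set.disjoint_sdiff_left
end

section
/- Let T be a full topological Markov expanding map of [0,1] for which Lebesgue measure is invariant and ergodic, with coding W: [0,1]\N -> A^N given by W_n(omega) = j iff T^n(omega) in I_j. Then the transition probabilities of the associated stationary chain satisfy p(b | a_{-infty}^{-1}) = lim_{n->infty} 1/|T'(omega_n)| for any choice of points omega_n with coding W_0^n(omega_n) = (b, a_{-1}, ..., a_{-n}), provided the limit exists uniformly (e.g. T piecewise C^{1+alpha}). -/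
open MeasureTheory

/-! A piecewise monotone map `T` of `[0,1]` with branch endpoints
`0 = η 0 < η 1 < … < η 𝒦 = 1` (here `𝒦 = K + 1`); the monotonicity intervals are
`I_j = (η (j-1), η j)`, indexed below by `j ≤ K` as `Set.Ioo (η j) (η (j+1))`. -/

/-- The branch endpoints are an increasing subdivision of `[0,1]`. -/
def IsSubdivision (K : ℕ) (η : ℕ → ℝ) : Prop :=
  η 0 = 0 ∧ η (K + 1) = 1 ∧ ∀ j, j ≤ K → η j < η (j + 1)

/-- `T` is piecewise `C²`: on each branch it agrees with a map which is `C²` on the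
closed branch interval. -/
def PiecewiseC2 (K : ℕ) (η : ℕ → ℝ) (T : ℝ → ℝ) : Prop :=
  ∀ j, j ≤ K → ∃ Tj : ℝ → ℝ,
    ContDiffOn ℝ 2 Tj (Set.Icc (η j) (η (j+1))) ∧
    Set.EqOn T Tj (Set.Ioo (η j) (η (j+1)))

/-- `T` is monotone on each branch. -/
def PiecewiseMonotone (K : ℕ) (η : ℕ → ℝ) (T : ℝ → ℝ) : Prop :=
  ∀ j, j ≤ K → StrictMonoOn T (Set.Ioo (η j) (η (j+1))) ∨
    StrictAntiOn T (Set.Ioo (η j) (η (j+1)))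

/-- `T` is full topological Markov: each branch is mapped onto `(0,1)`. -/
def FullMarkov (K : ℕ) (η : ℕ → ℝ) (T : ℝ → ℝ) : Prop :=
  ∀ j, j ≤ K → T '' Set.Ioo (η j) (η (j+1)) = Set.Ioo 0 1

/-- `T` is uniformly expanding: `|(T^m)'| ≥ c > 1` wherever defined. -/
def UniformlyExpanding (T : ℝ → ℝ) : Prop :=
  ∃ m : ℕ, 1 ≤ m ∧ ∃ c : ℝ, 1 < c ∧
    ∀ x ∈ Set.Icc (0:ℝ) 1, DifferentiableAt ℝ (T^[m]) x → c ≤ |deriv (T^[m]) x|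

/-!
The branch of `T` over `I_b` maps the cylinder `S_n` of points coded by `(b, a_{-1}, …, a_{-n})`
bijectively onto the cylinder coded by `(a_{-1}, …, a_{-n})`, so by the change of variables
formula the conditional probability is `λ(S_n) / ∫_{S_n} |T'|`, the inverse of the average of
`|T'|` over `S_n`. Since `T` is monotone on branches, `S_n` is an interval, and the mean value
theorem together with uniform expansion makes its length decay like `c^{-n/m}`. As `T'` is
uniformly continuous on `I_b`, the average of `|T'|` over `S_n` is then asymptotic to
`|T'(ω_n)|`, which expansion keeps away from `0`.
-/

open Set Filter Topology
open scoped ENNReal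

def branch (η : ℕ → ℝ) (j : ℕ) : Set ℝ := Ioo (η j) (η (j + 1))

section OrbitCylinder

variable {α : Type*} {T : α → α} {V : ℕ → Set α}

variable (T V) in
def orbitCylinder (n : ℕ) : Set α := {x | ∀ i < n, T^[i] x ∈ V i}

@[simp] lemma orbitCylinder_zero : orbitCylinder T V 0 = univ := by
  ext; simp [orbitCylinder]

lemma orbitCylinder_succ (n : ℕ) :
    orbitCylinder T V (n + 1) = V 0 ∩ T ⁻¹' orbitCylinder T (fun i => V (i + 1)) n := by
  ext x
  exact Nat.forall_lt_succ_left

lemma orbitCylinder_anti : Antitone (orbitCylinder T V) :=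
  fun _ _ hnm _ hx i hi => hx i (hi.trans_le hnm)

lemma orbitCylinder_subset_zero {n : ℕ} (hn : 0 < n) : orbitCylinder T V n ⊆ V 0 :=
  fun _ hx => hx 0 hn

lemma mapsTo_iterate_orbitCylinder (k n : ℕ) :
    MapsTo T^[k] (orbitCylinder T V (n + k)) (orbitCylinder T (fun i => V (i + k)) n) := by
  intro x hx i hi
  rw [← Function.iterate_add_apply]
  exact hx (i + k) (by omega)

lemma isOpen_orbitCylinder [TopologicalSpace α] (hV : ∀ i, IsOpen (V i))
    (hT : ∀ i, ContinuousOn T (V i)) (n : ℕ) : IsOpen (orbitCylinder T V n) := by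
  induction n generalizing V with
  | zero => simp
  | succ n ih =>
    rw [orbitCylinder_succ]
    exact (hT 0).isOpen_inter_preimage (hV 0) (ih (fun i => hV _) (fun i => hT _))

lemma Set.OrdConnected.inter_preimage {β : Type*} [LinearOrder α] [LinearOrder β] {f : α → β}
    {s : Set α} {t : Set β} (hs : s.OrdConnected) (hf : MonotoneOn f s ∨ AntitoneOn f s)
    (ht : t.OrdConnected) : (s ∩ f ⁻¹' t).OrdConnected := by
  refine ordConnected_iff_uIcc_subset.2 fun x hx y hy z hz => ?_
  have hsub : uIcc x y ⊆ s := hs.uIcc_subset hx.1 hy.1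
  refine ⟨hsub hz, ht.uIcc_subset hx.2 hy.2 ?_⟩
  rcases hf with hf | hf
  exacts [(hf.mono hsub).mapsTo_uIcc hz, (hf.mono hsub).mapsTo_uIcc hz]

lemma ordConnected_orbitCylinder [LinearOrder α] (hV : ∀ i, (V i).OrdConnected)
    (hT : ∀ i, MonotoneOn T (V i) ∨ AntitoneOn T (V i)) (n : ℕ) :
    (orbitCylinder T V n).OrdConnected := by
  induction n generalizing V with
  | zero => simpa using ordConnected_univ
  | succ n ih =>
    rw [orbitCylinder_succ]
    exact (hV 0).inter_preimage (hT 0) (ih (fun i => hV _) (fun i => hT _))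

end OrbitCylinder

lemma hasDerivAt_iterate_of_mem_orbitCylinder {T : ℝ → ℝ} {V : ℕ → Set ℝ}
    (hT : ∀ i, ∀ x ∈ V i, DifferentiableAt ℝ T x) {n : ℕ} {x : ℝ}
    (hx : x ∈ orbitCylinder T V n) :
    HasDerivAt T^[n] (∏ i ∈ Finset.range n, deriv T (T^[i] x)) x := by
  induction n with
  | zero => simpa using hasDerivAt_id x
  | succ n ih =>
    rw [Function.iterate_succ', Finset.prod_range_succ, mul_comm]
    exact (hT n _ (hx n n.lt_succ_self)).hasDerivAt.comp x
      (ih (orbitCylinder_anti n.le_succ hx))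

lemma mul_abs_sub_le_abs_sub_of_le_abs_deriv {f : ℝ → ℝ} {c x y : ℝ}
    (hf : ∀ z ∈ uIcc x y, DifferentiableAt ℝ f z)
    (hc : ∀ z ∈ uIcc x y, c ≤ |deriv f z|) : c * |x - y| ≤ |f x - f y| := by
  wlog hxy : x < y generalizing x y
  · rcases (not_lt.1 hxy).lt_or_eq with hyx | rfl
    · rw [abs_sub_comm x, abs_sub_comm (f x)]
      exact this (uIcc_comm x y ▸ hf) (uIcc_comm x y ▸ hc) hyx
    · simp
  have hIcc : Icc x y ⊆ uIcc x y := Icc_subset_uIcc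
  obtain ⟨ξ, hξ, hslope⟩ := exists_deriv_eq_slope f hxy
    (fun z hz => (hf z (hIcc hz)).continuousAt.continuousWithinAt)
    (fun z hz => (hf z (hIcc (Ioo_subset_Icc_self hz))).differentiableWithinAt)
  have hcξ := hc ξ (hIcc (Ioo_subset_Icc_self hξ))
  rw [hslope, abs_div, abs_of_pos (sub_pos.2 hxy), le_div_iff₀ (sub_pos.2 hxy)] at hcξ
  rwa [abs_sub_comm, abs_of_pos (sub_pos.2 hxy), abs_sub_comm]

structure IsBranchSequence (T : ℝ → ℝ) (V : ℕ → Set ℝ) : Prop where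
  subset_Icc : ∀ i, V i ⊆ Icc 0 1
  ordConnected : ∀ i, (V i).OrdConnected
  monotoneOn_or_antitoneOn : ∀ i, MonotoneOn T (V i) ∨ AntitoneOn T (V i)
  differentiableAt : ∀ i, ∀ x ∈ V i, DifferentiableAt ℝ T x

namespace IsBranchSequence

variable {T : ℝ → ℝ} {V : ℕ → Set ℝ}

lemma shift (hV : IsBranchSequence T V) (k : ℕ) : IsBranchSequence T (fun i => V (i + k)) where
  subset_Icc i := hV.subset_Icc (i + k)
  ordConnected i := hV.ordConnected (i + k)
  monotoneOn_or_antitoneOn i := hV.monotoneOn_or_antitoneOn (i + k)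
  differentiableAt i := hV.differentiableAt (i + k)

lemma continuousOn (hV : IsBranchSequence T V) (i : ℕ) : ContinuousOn T (V i) :=
  fun x hx => (hV.differentiableAt i x hx).continuousAt.continuousWithinAt

lemma orbitCylinder_subset_Icc (hV : IsBranchSequence T V) {n : ℕ} (hn : 0 < n) :
    orbitCylinder T V n ⊆ Icc 0 1 :=
  (orbitCylinder_subset_zero hn).trans (hV.subset_Icc 0)

lemma abs_sub_le_inv_pow {m : ℕ} {c : ℝ} (hc : 0 < c)
    (hexp : ∀ x ∈ Icc (0:ℝ) 1, DifferentiableAt ℝ (T^[m]) x → c ≤ |deriv (T^[m]) x|)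
    (k : ℕ) (hV : IsBranchSequence T V) {x y : ℝ} (hx : x ∈ orbitCylinder T V (k * m + 1))
    (hy : y ∈ orbitCylinder T V (k * m + 1)) : |x - y| ≤ c⁻¹ ^ k := by
  induction k generalizing V x y with
  | zero =>
    obtain ⟨hx0, hx1⟩ := hV.orbitCylinder_subset_Icc (Nat.succ_pos _) hx
    obtain ⟨hy0, hy1⟩ := hV.orbitCylinder_subset_Icc (Nat.succ_pos _) hy
    rw [pow_zero, abs_sub_le_iff]
    constructor <;> linarith
  | succ k ih =>
    rw [show (k + 1) * m + 1 = k * m + 1 + m by ring] at hx hy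
    have himage := ih (hV.shift m) (mapsTo_iterate_orbitCylinder m _ hx)
      (mapsTo_iterate_orbitCylinder m _ hy)
    have hsub := (ordConnected_orbitCylinder hV.ordConnected hV.monotoneOn_or_antitoneOn
      _).uIcc_subset hx hy
    have hdiff : ∀ z ∈ uIcc x y, DifferentiableAt ℝ T^[m] z := fun z hz =>
      (hasDerivAt_iterate_of_mem_orbitCylinder hV.differentiableAt
        (orbitCylinder_anti (by omega) (hsub hz))).differentiableAt
    have hstretch : c * |x - y| ≤ |T^[m] x - T^[m] y| :=
      mul_abs_sub_le_abs_sub_of_le_abs_deriv hdiff fun z hz =>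
        hexp z (hV.orbitCylinder_subset_Icc (by omega) (hsub hz)) (hdiff z hz)
    calc |x - y| = c⁻¹ * (c * |x - y|) := by field_simp
      _ ≤ c⁻¹ * c⁻¹ ^ k := by gcongr; exact hstretch.trans himage
      _ = c⁻¹ ^ (k + 1) := by ring

lemma eventually_abs_sub_lt (hV : IsBranchSequence T V) (hexp : UniformlyExpanding T) {d : ℝ}
    (hd : 0 < d) :
    ∀ᶠ n in atTop, ∀ x ∈ orbitCylinder T V n, ∀ y ∈ orbitCylinder T V n, |x - y| < d := by
  obtain ⟨m, -, c, hc, hm⟩ := hexp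
  obtain ⟨k, hk⟩ := exists_pow_lt_of_lt_one hd (inv_lt_one_of_one_lt₀ hc)
  filter_upwards [eventually_ge_atTop (k * m + 1)] with n hn x hx y hy
  exact (abs_sub_le_inv_pow (by linarith) hm k hV (orbitCylinder_anti hn hx)
    (orbitCylinder_anti hn hy)).trans_lt hk

lemma eventually_deriv_ne_zero (hV : IsBranchSequence T V) (hexp : UniformlyExpanding T) :
    ∀ᶠ n in atTop, ∀ x ∈ orbitCylinder T V n, deriv T x ≠ 0 := by
  obtain ⟨m, hm1, c, hc, hm⟩ := hexp
  filter_upwards [eventually_ge_atTop m] with n hn x hx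
  have hder := hasDerivAt_iterate_of_mem_orbitCylinder hV.differentiableAt
    (orbitCylinder_anti hn hx)
  have hcx := hm x (hV.orbitCylinder_subset_Icc (by omega) hx) hder.differentiableAt
  rw [hder.deriv] at hcx
  exact Finset.prod_ne_zero_iff.1 (abs_pos.1 (zero_lt_one.trans (hc.trans_le hcx))) 0
    (Finset.mem_range.2 hm1)

end IsBranchSequence

section Branches

variable {K : ℕ} {η : ℕ → ℝ} {T : ℝ → ℝ} {j : ℕ}

lemma IsSubdivision.branch_subset_Ioo (hη : IsSubdivision K η) (hj : j ≤ K) :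
    branch η j ⊆ Ioo 0 1 := by
  obtain ⟨h0, h1, hlt⟩ := hη
  have hmono : MonotoneOn η (Set.Iic (K + 1)) :=
    (strictMonoOn_Iic_of_lt_succ fun m hm => hlt m (Nat.lt_succ_iff.1 hm)).monotoneOn
  rintro x ⟨hx0, hx1⟩
  exact ⟨h0 ▸ (hmono (by simp) (by simp; omega) (Nat.zero_le j)).trans_lt hx0,
    h1 ▸ hx1.trans_le (hmono (by simp; omega) (by simp) (by omega))⟩

lemma PiecewiseC2.exists_continuousOn_hasDerivAt (hC2 : PiecewiseC2 K η T)
    (hη : IsSubdivision K η) (hj : j ≤ K) :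
    ∃ g, ContinuousOn g (Icc (η j) (η (j + 1))) ∧
      ∀ x ∈ branch η j, HasDerivAt T (g x) x := by
  obtain ⟨Tj, hTj, hEq⟩ := hC2 j hj
  refine ⟨derivWithin Tj (Icc (η j) (η (j + 1))),
    hTj.continuousOn_derivWithin (uniqueDiffOn_Icc (hη.2.2 j hj)) (by norm_num), fun x hx => ?_⟩
  have hIoo : Ioo (η j) (η (j + 1)) ∈ 𝓝 x := Ioo_mem_nhds hx.1 hx.2
  have hIcc : Icc (η j) (η (j + 1)) ∈ 𝓝 x := mem_of_superset hIoo Ioo_subset_Icc_self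
  rw [derivWithin_of_mem_nhds hIcc]
  exact ((hTj.differentiableOn (by norm_num)).differentiableAt hIcc).hasDerivAt
    |>.congr_of_eventuallyEq (eventuallyEq_of_mem hIoo hEq)

lemma PiecewiseC2.hasDerivAt (hC2 : PiecewiseC2 K η T) (hη : IsSubdivision K η) (hj : j ≤ K)
    {x : ℝ} (hx : x ∈ branch η j) : HasDerivAt T (deriv T x) x := by
  obtain ⟨g, -, hTg⟩ := hC2.exists_continuousOn_hasDerivAt hη hj
  exact (hTg x hx).differentiableAt.hasDerivAt

lemma PiecewiseC2.uniformContinuousOn_abs_deriv (hC2 : PiecewiseC2 K η T)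
    (hη : IsSubdivision K η) (hj : j ≤ K) :
    UniformContinuousOn (fun x => |deriv T x|) (branch η j) := by
  obtain ⟨g, hg, hTg⟩ := hC2.exists_continuousOn_hasDerivAt hη hj
  exact ((isCompact_Icc.uniformContinuousOn_of_continuous hg.abs).mono Ioo_subset_Icc_self).congr
    fun x hx => by simp only [(hTg x hx).deriv]

lemma PiecewiseC2.exists_abs_deriv_le (hC2 : PiecewiseC2 K η T) (hη : IsSubdivision K η)
    (hj : j ≤ K) : ∃ M, ∀ x ∈ branch η j, |deriv T x| ≤ M := by
  obtain ⟨g, hg, hTg⟩ := hC2.exists_continuousOn_hasDerivAt hη hj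
  obtain ⟨M, hM⟩ := isCompact_Icc.exists_bound_of_continuousOn hg
  exact ⟨M, fun x hx => (hTg x hx).deriv ▸ hM x (Ioo_subset_Icc_self hx)⟩

lemma PiecewiseC2.integrableOn_abs_deriv (hC2 : PiecewiseC2 K η T) (hη : IsSubdivision K η)
    (hj : j ≤ K) : IntegrableOn (fun x => |deriv T x|) (branch η j) := by
  obtain ⟨M, hM⟩ := hC2.exists_abs_deriv_le hη hj
  exact Measure.integrableOn_of_bounded measure_Ioo_lt_top.ne
    (measurable_deriv T).abs.aestronglyMeasurable
    (ae_restrict_of_forall_mem measurableSet_Ioo fun x hx => by simpa using hM x hx)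

lemma isBranchSequence_branch (hη : IsSubdivision K η) (hC2 : PiecewiseC2 K η T)
    (hmono : PiecewiseMonotone K η T) (s : ℕ → Fin (K + 1)) :
    IsBranchSequence T (fun i => branch η (s i)) where
  subset_Icc i := (hη.branch_subset_Ioo (s i).is_le).trans Ioo_subset_Icc_self
  ordConnected _ := ordConnected_Ioo
  monotoneOn_or_antitoneOn i :=
    (hmono _ (s i).is_le).imp StrictMonoOn.monotoneOn StrictAntiOn.antitoneOn
  differentiableAt i _ hx := (hC2.hasDerivAt hη (s i).is_le hx).differentiableAt

lemma isOpen_orbitCylinder_branch (hη : IsSubdivision K η) (hC2 : PiecewiseC2 K η T)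
    (hmono : PiecewiseMonotone K η T) (s : ℕ → Fin (K + 1)) (n : ℕ) :
    IsOpen (orbitCylinder T (fun i => branch η (s i)) n) :=
  isOpen_orbitCylinder (fun _ => isOpen_Ioo) (isBranchSequence_branch hη hC2 hmono s).continuousOn n

end Branches

section Averages

variable {α : Type*} [MeasurableSpace α] {μ : Measure α} {f : α → ℝ}

lemma abs_setAverage_sub_le {s : Set α} {r ε : ℝ} (hs : MeasurableSet s) (h0 : μ s ≠ 0)
    (hfin : μ s ≠ ∞) (hf : IntegrableOn f s μ) (hε : ∀ x ∈ s, |f x - r| ≤ ε) :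
    |⨍ x in s, f x ∂μ - r| ≤ ε := by
  simpa [Real.dist_eq] using (convex_closedBall r ε).set_average_mem Metric.isClosed_closedBall
    h0 hfin (ae_restrict_of_forall_mem hs fun x hx => by simpa [Real.dist_eq] using hε x hx) hf

lemma tendsto_setAverage_sub_of_forall_abs_sub_le {ι : Type*} {l : Filter ι} {S : ι → Set α}
    {r : ι → ℝ} (hS : ∀ i, MeasurableSet (S i)) (h0 : ∀ i, μ (S i) ≠ 0)
    (hfin : ∀ i, μ (S i) ≠ ∞) (hf : ∀ i, IntegrableOn f (S i) μ)
    (hosc : ∀ ε > 0, ∀ᶠ i in l, ∀ x ∈ S i, |f x - r i| ≤ ε) :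
    Tendsto (fun i => ⨍ x in S i, f x ∂μ - r i) l (𝓝 0) := by
  refine Metric.tendsto_nhds.2 fun ε hε => ?_
  filter_upwards [hosc (ε / 2) (half_pos hε)] with i hi
  rw [Real.dist_eq, sub_zero]
  exact (abs_setAverage_sub_le (hS i) (h0 i) (hfin i) (hf i) hi).trans_lt (half_lt_self hε)

end Averages

lemma UniformContinuousOn.eventually_abs_sub_le {ι : Type*} {l : Filter ι} {f : ℝ → ℝ}
    {t : Set ℝ} (hf : UniformContinuousOn f t) {S : ι → Set ℝ} {ω : ι → ℝ}
    (hS : ∀ i, S i ⊆ t) (hω : ∀ i, ω i ∈ S i)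
    (hshrink : ∀ d > 0, ∀ᶠ i in l, ∀ x ∈ S i, ∀ y ∈ S i, |x - y| < d) {ε : ℝ} (hε : 0 < ε) :
    ∀ᶠ i in l, ∀ x ∈ S i, |f x - f (ω i)| ≤ ε := by
  obtain ⟨d, hd, hfd⟩ := Metric.uniformContinuousOn_iff.1 hf ε hε
  filter_upwards [hshrink d hd] with i hi x hx
  exact (hfd x (hS i hx) (ω i) (hS i (hω i)) (hi x hx _ (hω i))).le

lemma pos_of_tendsto_one_div_abs {ι : Type*} {l : Filter ι} [l.NeBot] {u : ι → ℝ} {L M : ℝ}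
    (h : Tendsto (fun n => 1 / |u n|) l (𝓝 L)) (hu : ∀ᶠ n in l, u n ≠ 0 ∧ |u n| ≤ M) :
    0 < L := by
  obtain ⟨n, hn0, hnM⟩ := hu.exists
  refine (one_div_pos.2 ((abs_pos.2 hn0).trans_le hnM)).trans_le (ge_of_tendsto h ?_)
  filter_upwards [hu] with k hk
  exact one_div_le_one_div_of_le (abs_pos.2 hk.1) hk.2

lemma measure_div_measure_image_eq_inv_setAverage {f f' : ℝ → ℝ} {s : Set ℝ}
    (hs : MeasurableSet s) (hf : ∀ x ∈ s, HasDerivWithinAt f (f' x) s x) (hinj : InjOn f s) :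
    (volume s).toReal / (volume (f '' s)).toReal = (⨍ x in s, |f' x|)⁻¹ := by
  have h := integral_image_eq_integral_abs_deriv_smul hs hf hinj fun _ => (1 : ℝ)
  simp only [setIntegral_const, smul_eq_mul, mul_one] at h
  rw [setAverage_eq, ← h, smul_eq_mul, mul_inv, inv_inv, div_eq_mul_inv]
  rfl

lemma measure_branch_inter_preimage_div_eq_inv_setAverage {K : ℕ} {η : ℕ → ℝ}
    {T : ℝ → ℝ} (hη : IsSubdivision K η) (hC2 : PiecewiseC2 K η T)
    (hmono : PiecewiseMonotone K η T) (hfull : FullMarkov K η T) {j : ℕ} (hj : j ≤ K)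
    {C : Set ℝ} (hS : MeasurableSet (branch η j ∩ T ⁻¹' C)) :
    (volume (branch η j ∩ T ⁻¹' C)).toReal / (volume (Icc 0 1 ∩ C)).toReal =
      (⨍ x in branch η j ∩ T ⁻¹' C, |deriv T x|)⁻¹ := by
  have himage : volume (Icc (0 : ℝ) 1 ∩ C) = volume (T '' (branch η j ∩ T ⁻¹' C)) := by
    rw [image_inter_preimage, branch, hfull j hj]
    exact measure_congr (ae_eq_set_inter Ioo_ae_eq_Icc.symm (ae_eq_refl C))
  have hinj : InjOn T (branch η j) := (hmono j hj).elim StrictMonoOn.injOn StrictAntiOn.injOn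
  rw [himage]
  exact measure_div_measure_image_eq_inv_setAverage hS
    (fun x hx => (hC2.hasDerivAt hη hj hx.1).hasDerivWithinAt) (hinj.mono inter_subset_left)

lemma tendsto_inv_setAverage_abs_deriv {K : ℕ} {η : ℕ → ℝ} {T : ℝ → ℝ}
    (hη : IsSubdivision K η) (hC2 : PiecewiseC2 K η T) (hmono : PiecewiseMonotone K η T)
    (hexp : UniformlyExpanding T) (s : ℕ → Fin (K + 1)) {ω : ℕ → ℝ}
    (hω : ∀ n, ω n ∈ orbitCylinder T (fun i => branch η (s i)) (n + 1)) {L : ℝ}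
    (hlim : Tendsto (fun n => 1 / |deriv T (ω n)|) atTop (𝓝 L)) :
    Tendsto (fun n => (⨍ x in orbitCylinder T (fun i => branch η (s i)) (n + 1), |deriv T x|)⁻¹)
      atTop (𝓝 L) := by
  set S : ℕ → Set ℝ := fun n => orbitCylinder T (fun i => branch η (s i)) (n + 1)
  have hV := isBranchSequence_branch hη hC2 hmono s
  have hSopen : ∀ n, IsOpen (S n) := fun n => isOpen_orbitCylinder_branch hη hC2 hmono s _
  have hSb : ∀ n, S n ⊆ branch η (s 0) := fun n => orbitCylinder_subset_zero n.succ_pos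
  have hshrink : ∀ d > 0, ∀ᶠ n in atTop, ∀ x ∈ S n, ∀ y ∈ S n, |x - y| < d :=
    fun d hd => (tendsto_add_atTop_nat 1).eventually (hV.eventually_abs_sub_lt hexp hd)
  have hL : 0 < L := by
    obtain ⟨M, hM⟩ := hC2.exists_abs_deriv_le hη (s 0).is_le
    refine pos_of_tendsto_one_div_abs (M := M) hlim ?_
    filter_upwards [(tendsto_add_atTop_nat 1).eventually (hV.eventually_deriv_ne_zero hexp)]
      with n hn
    exact ⟨hn _ (hω n), hM _ (hSb n (hω n))⟩
  have hD : Tendsto (fun n => |deriv T (ω n)|) atTop (𝓝 L⁻¹) := by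
    simpa only [one_div, inv_inv] using hlim.inv₀ hL.ne'
  have havg : Tendsto (fun n => (⨍ x in S n, |deriv T x|) - |deriv T (ω n)|) atTop (𝓝 0) :=
    tendsto_setAverage_sub_of_forall_abs_sub_le (fun n => (hSopen n).measurableSet)
      (fun n => ((hSopen n).measure_pos volume ⟨ω n, hω n⟩).ne')
      (fun n => ((measure_mono (hSb n)).trans_lt measure_Ioo_lt_top).ne)
      (fun n => (hC2.integrableOn_abs_deriv hη (s 0).is_le).mono_set (hSb n))
      fun ε hε => (hC2.uniformContinuousOn_abs_deriv hη (s 0).is_le).eventually_abs_sub_le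
        hSb hω hshrink hε
  simpa only [sub_add_cancel, zero_add, inv_inv] using (havg.add hD).inv₀ (by simpa using hL.ne')

theorem transition_probabilities_from_map_general (K : ℕ) (η : ℕ → ℝ) (T : ℝ → ℝ)
    (hη : IsSubdivision K η) (hC2 : PiecewiseC2 K η T)
    (hmono : PiecewiseMonotone K η T) (hfull : FullMarkov K η T)
    (hexp : UniformlyExpanding T)
    (b : Fin (K+1)) (a : ℕ → Fin (K+1)) (ω : ℕ → ℝ)
    (hcode : ∀ n : ℕ, ω n ∈ Set.Ioo (η b) (η ((b : ℕ) + 1)) ∧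
      ∀ i, i < n → T^[i+1] (ω n) ∈ Set.Ioo (η (a i)) (η ((a i : ℕ) + 1)))
    (L : ℝ)
    (hlim : Filter.Tendsto (fun n => 1 / |deriv T (ω n)|) Filter.atTop (nhds L)) :
    Filter.Tendsto (fun n =>
        (volume {x : ℝ | x ∈ Set.Ioo (η b) (η ((b : ℕ) + 1)) ∧
          ∀ i, i < n → T^[i+1] x ∈ Set.Ioo (η (a i)) (η ((a i : ℕ) + 1))}).toReal /
        (volume {x : ℝ | x ∈ Set.Icc (0:ℝ) 1 ∧
          ∀ i, i < n → T^[i] x ∈ Set.Ioo (η (a i)) (η ((a i : ℕ) + 1))}).toReal)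
      Filter.atTop (nhds L) := by
  let s : ℕ → Fin (K + 1) := fun | 0 => b | i + 1 => a i
  have hS : ∀ n, branch η b ∩ T ⁻¹' orbitCylinder T (fun i => branch η (a i)) n =
      orbitCylinder T (fun i => branch η (s i)) (n + 1) :=
    fun n => (orbitCylinder_succ (V := fun i => branch η (s i)) n).symm
  refine (tendsto_inv_setAverage_abs_deriv hη hC2 hmono hexp s (fun n => hS n ▸ hcode n)
    hlim).congr fun n => ?_
  rw [← hS n]
  exact (measure_branch_inter_preimage_div_eq_inv_setAverage hη hC2 hmono hfull b.is_le
    (hS n ▸ isOpen_orbitCylinder_branch hη hC2 hmono s _).measurableSet).symm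

/-- Let `T` be a full topological Markov expanding map of `[0,1]`
for which Lebesgue measure is invariant and ergodic, with coding `W_n(ω) = j` iff
`T^n(ω) ∈ I_j`.  If `(ω_n)` are points coded by `(b, a_{-1}, …, a_{-n})` and
`1/|T'(ω_n)|` converges to `L`, then the conditional probabilities
`P(X_0 = b | X_{-n}^{-1} = a_{-n}^{-1})` of the associated stationary chain converge
to the same limit `L`; i.e. `p(b | a_{-∞}^{-1}) = lim_n 1/|T'(ω_n)|`.
Here `a i` denotes the symbol at position `-(i+1)` and the monotonicity interval with
symbol `j : Fin (K+1)` is `I_j = (η j, η (j+1))`. -/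
theorem transition_probabilities_from_map (K : ℕ) (η : ℕ → ℝ) (T : ℝ → ℝ)
    (hη : IsSubdivision K η) (hC2 : PiecewiseC2 K η T)
    (hmono : PiecewiseMonotone K η T) (hfull : FullMarkov K η T)
    (hexp : UniformlyExpanding T)
    (hinv : MeasurePreserving T (volume.restrict (Set.Icc (0:ℝ) 1))
      (volume.restrict (Set.Icc (0:ℝ) 1)))
    (herg : ∀ s : Set ℝ, MeasurableSet s → T ⁻¹' s = s →
      volume.restrict (Set.Icc (0:ℝ) 1) s = 0 ∨ volume.restrict (Set.Icc (0:ℝ) 1) s = 1)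
    (b : Fin (K+1)) (a : ℕ → Fin (K+1)) (ω : ℕ → ℝ)
    (hcode : ∀ n : ℕ, ω n ∈ Set.Ioo (η b) (η ((b : ℕ) + 1)) ∧
      ∀ i, i < n → T^[i+1] (ω n) ∈ Set.Ioo (η (a i)) (η ((a i : ℕ) + 1)))
    (L : ℝ)
    (hlim : Filter.Tendsto (fun n => 1 / |deriv T (ω n)|) Filter.atTop (nhds L)) :
    Filter.Tendsto (fun n =>
        (volume {x : ℝ | x ∈ Set.Ioo (η b) (η ((b : ℕ) + 1)) ∧
          ∀ i, i < n → T^[i+1] x ∈ Set.Ioo (η (a i)) (η ((a i : ℕ) + 1))}).toReal /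
        (volume {x : ℝ | x ∈ Set.Icc (0:ℝ) 1 ∧
          ∀ i, i < n → T^[i] x ∈ Set.Ioo (η (a i)) (η ((a i : ℕ) + 1))}).toReal)
      Filter.atTop (nhds L) :=
  transition_probabilities_from_map_general K η T hη hC2 hmono hfull hexp b a ω hcode L hlim
end
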